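/- Fix m ∈ (2,6) and set λ₁(m) = (m²−6m)/8 + i·(m−2)√(8m−m²)/8. For every ρ > 0 such that the closed disk of center λ₁(m) and radius ρ is contained in {z∈ℂ : Re z < 0} ∖ (−∞,−1/4], there exists ε₀ > 0 such that for every ε ∈ (0,ε₀) the function λ ↦ D_ε(λ;m) has exactly one zero in the open disk {λ : |λ−λ₁(m)| < ρ}; in particular this zero has negative real part, and it converges to λ₁(m) as ε → 0⁺. -/

import Mathlib

open Complex Filter Topology

/-- Principal branch of the complex square root. -/
noncomputable def csqrt (z : ℂ) : ℂ := z ^ (1/2 : ℂ)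

/-- The dispersion relation D_ε(λ;m). -/
noncomputable def dispersion (ε m : ℝ) (l : ℂ) : ℂ :=
  -(1/4) * (csqrt (1 + 4 * ε * (m + ε * m ^ 2 + l)) + csqrt (1 + 4 * ε * l)) *
    ((ε : ℂ)⁻¹ * (csqrt (1 + 4 * ε * (m + ε * m ^ 2 + l)) - 1) + 1 + csqrt (1 + 4 * l)) *
    (1 - csqrt (1 + 4 * l) / (1 + m)) + m + ε * m ^ 2

/-- λ₁(m) = (m²−6m)/8 + i(m−2)√(8m−m²)/8. -/
noncomputable def lambda1 (m : ℝ) : ℂ :=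
  (((m ^ 2 - 6 * m) / 8 : ℝ) : ℂ) +
    Complex.I * (((m - 2) * Real.sqrt (8 * m - m ^ 2) / 8 : ℝ) : ℂ)

/-!
Rewriting `ε⁻¹ (√(1 + 4εA) - 1)` as `4A / (√(1 + 4εA) + 1)` extends `D_ε(λ; m)` to a function of
`(ε, λ)` that is holomorphic near `ε = 0`. At `ε = 0` it equals
`(s - 1)(s - σ)(s - σ̄) / (4(1 + m))` with `s = √(1 + 4λ)` and `σ = √(1 + 4λ₁)`, so its only zero
in the closed disk is `λ₁` (`s = 1` gives `λ = 0` and `s = σ̄` gives `λ = λ̄₁`, both outside the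
disk), and that zero is simple. The implicit function theorem continues `λ₁` to a zero `λ(ε)`
that is the only one near `λ₁`, and since `D_0` has no zero on the compact annulus between a small
disk around `λ₁` and the closed disk, neither has `D_ε` for small `ε`.
-/

open ComplexConjugate Metric

lemma IsCompact.eventually_forall_apply_ne {X Y Z : Type*} [TopologicalSpace X]
    [TopologicalSpace Y] [TopologicalSpace Z] [T1Space Z] {f : X × Y → Z} {x₀ : X} {K : Set Y}
    {c : Z} (hK : IsCompact K) (hf : ∀ y ∈ K, ContinuousAt f (x₀, y))
    (hne : ∀ y ∈ K, f (x₀, y) ≠ c) : ∀ᶠ x in 𝓝 x₀, ∀ y ∈ K, f (x, y) ≠ c :=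
  hK.eventually_forall_of_forall_eventually fun y hy =>
    (hf y hy).eventually (isOpen_ne.mem_nhds (hne y hy))

lemma ContinuousLinearMap.isInvertible_of_apply_one_ne_zero {𝕜 : Type*} [Field 𝕜]
    [TopologicalSpace 𝕜] [ContinuousMul 𝕜] {f : 𝕜 →L[𝕜] 𝕜} (hf : f 1 ≠ 0) : f.IsInvertible :=
  ⟨ContinuousLinearEquiv.unitsEquivAut 𝕜 (Units.mk0 _ hf), ContinuousLinearMap.ext_ring (by simp)⟩

lemma HasStrictFDerivAt.isInvertible_comp_inr {𝕜 E : Type*} [NontriviallyNormedField 𝕜]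
    [NormedAddCommGroup E] [NormedSpace 𝕜 E] {f : E × 𝕜 → 𝕜} {f' : E × 𝕜 →L[𝕜] 𝕜} {x₀ : E}
    {a d : 𝕜} (hf : HasStrictFDerivAt f f' (x₀, a)) (hd : HasDerivAt (fun y => f (x₀, y)) d a)
    (hd0 : d ≠ 0) : (f' ∘L .inr 𝕜 E 𝕜).IsInvertible := by
  refine ContinuousLinearMap.isInvertible_of_apply_one_ne_zero ?_
  have h := (hf.hasFDerivAt.comp a (hasFDerivAt_prodMk_right x₀ a)).hasDerivAt
  rwa [hd.unique h] at hd0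

section ImplicitZero

variable {𝕜 E₁ E₂ F : Type*} [NontriviallyNormedField 𝕜]
  [NormedAddCommGroup E₁] [NormedSpace 𝕜 E₁] [CompleteSpace E₁]
  [NormedAddCommGroup E₂] [NormedSpace 𝕜 E₂] [ProperSpace E₂]
  [NormedAddCommGroup F] [NormedSpace 𝕜 F] [CompleteSpace F]

theorem HasStrictFDerivAt.exists_eventually_unique_zero_mem_ball {f : E₁ × E₂ → F}
    {f' : E₁ × E₂ →L[𝕜] F} {x₀ : E₁} {a : E₂} {ρ : ℝ} (hf : HasStrictFDerivAt f f' (x₀, a))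
    (hf' : (f' ∘L .inr 𝕜 E₁ E₂).IsInvertible) (ha : f (x₀, a) = 0) (hρ : 0 < ρ)
    (hcont : ∀ y ∈ closedBall a ρ, ContinuousAt f (x₀, y))
    (huniq : ∀ y ∈ closedBall a ρ, f (x₀, y) = 0 → y = a) :
    ∃ ψ : E₁ → E₂, Tendsto ψ (𝓝 x₀) (𝓝 a) ∧ ∀ᶠ x in 𝓝 x₀,
      ψ x ∈ ball a ρ ∧ f (x, ψ x) = 0 ∧ ∀ y ∈ ball a ρ, f (x, y) = 0 → y = ψ x := by
  set ψ := hf.implicitFunctionOfProdDomain hf'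
  have hψ : Tendsto ψ (𝓝 x₀) (𝓝 a) := hf.tendsto_implicitFunctionOfProdDomain hf'
  have hloc : ∀ᶠ v in 𝓝 x₀ ×ˢ 𝓝 a, f v = 0 ↔ ψ v.1 = v.2 := by
    simpa [ha, ← nhds_prod_eq] using hf.eventually_apply_eq_iff_implicitFunctionOfProdDomain hf'
  obtain ⟨P, hP, Q, hQ, hPQ⟩ := eventually_prod_iff.1 hloc
  obtain ⟨r, hr, hrQ⟩ := eventually_nhds_iff_ball.1 hQ
  have hr' : 0 < min r ρ := lt_min hr hρ
  have hannulus : ∀ᶠ x in 𝓝 x₀, ∀ y ∈ closedBall a ρ \ ball a (min r ρ), f (x, y) ≠ 0 :=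
    ((isCompact_closedBall a ρ).diff isOpen_ball).eventually_forall_apply_ne
      (fun y hy => hcont y hy.1) fun y hy h => hy.2 (huniq y hy.1 h ▸ mem_ball_self hr')
  refine ⟨ψ, hψ, ?_⟩
  filter_upwards [hP, hannulus, hψ (ball_mem_nhds a hr')] with x hxP hxK hxψ
  have hrQ' : ∀ y ∈ ball a (min r ρ), Q y := fun y hy =>
    hrQ y (ball_subset_ball (min_le_left _ _) hy)
  refine ⟨ball_subset_ball (min_le_right _ _) hxψ, (hPQ hxP (hrQ' _ hxψ)).2 rfl,
    fun y hy hfy => ?_⟩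
  by_cases hyr : y ∈ ball a (min r ρ)
  · exact ((hPQ hxP (hrQ' y hyr)).1 hfy).symm
  · exact absurd hfy (hxK y ⟨ball_subset_closedBall hy, hyr⟩)

end ImplicitZero

lemma csqrt_one : csqrt 1 = 1 := by simp [csqrt]

lemma csqrt_sq (z : ℂ) : csqrt z ^ 2 = z := by
  simp [csqrt, one_div]

lemma csqrt_sq_of_re_pos {w : ℂ} (hw : 0 < w.re) : csqrt (w ^ 2) = w := by
  rw [csqrt, one_div]
  exact sq_cpow_two_inv hw

lemma csqrt_add_one_ne_zero (z : ℂ) : csqrt z + 1 ≠ 0 := by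
  refine fun h => absurd (congrArg re h) (ne_of_gt ?_)
  rw [add_re, csqrt, one_div, cpow_inv_two_re]
  simp only [one_re, zero_re]
  positivity

lemma hasDerivAt_csqrt {z : ℂ} (hz : z ∈ slitPlane) : HasDerivAt csqrt (1 / (2 * csqrt z)) z := by
  have hz0 : z ≠ 0 := slitPlane_ne_zero hz
  refine (hasStrictDerivAt_cpow_const hz).hasDerivAt.congr_deriv ?_
  have hs : csqrt z ≠ 0 := fun h => hz0 (by rw [← csqrt_sq z, h]; ring)
  rw [cpow_sub _ _ hz0, cpow_one, ← csqrt]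
  field_simp
  linear_combination csqrt_sq z

lemma one_add_four_mul_mem_slitPlane {w : ℂ} (hw : ¬(w.im = 0 ∧ w.re ≤ -(1 / 4))) :
    1 + 4 * w ∈ slitPlane := by
  rw [mem_slitPlane_iff]
  by_cases him : w.im = 0
  · left
    have : -(1 / 4) < w.re := lt_of_not_ge fun h => hw ⟨him, h⟩
    simp only [add_re, one_re, mul_re, re_ofNat, im_ofNat]
    linarith
  · right
    simpa using him

section Sigma1

variable {m : ℝ}

lemma lambda1_re : (lambda1 m).re = (m ^ 2 - 6 * m) / 8 := by simp [lambda1, -ofReal_pow]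

lemma lambda1_im : (lambda1 m).im = (m - 2) * √(8 * m - m ^ 2) / 8 := by simp [lambda1, -ofReal_pow]

lemma lambda1_im_pos (h2 : 2 < m) (h8 : m < 8) : 0 < (lambda1 m).im := by
  rw [lambda1_im]
  have : 0 < 8 * m - m ^ 2 := by nlinarith
  have : 0 < m - 2 := by linarith
  positivity

noncomputable def sigma1 (m : ℝ) : ℂ := ⟨(m - 2) / 2, √(8 * m - m ^ 2) / 2⟩

lemma sigma1_sq (hm : 0 ≤ 8 * m - m ^ 2) : sigma1 m ^ 2 = 1 + 4 * lambda1 m := by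
  have hq := Real.sq_sqrt hm
  rw [sq]
  apply Complex.ext <;> simp [sigma1, lambda1_re, lambda1_im]
  · linear_combination (-1 / 4) * hq
  · ring

lemma sigma1_add_conj : sigma1 m + conj (sigma1 m) = m - 2 := by
  apply Complex.ext <;> simp [sigma1]

lemma sigma1_mul_conj (hm : 0 ≤ 8 * m - m ^ 2) : sigma1 m * conj (sigma1 m) = m + 1 := by
  have hq := Real.sq_sqrt hm
  apply Complex.ext <;> simp [sigma1]
  · linear_combination (1 / 4) * hq
  · ring

lemma sigma1_im_pos (h0 : 0 < m) (h8 : m < 8) : 0 < (sigma1 m).im := by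
  simp only [sigma1]
  have : 0 < 8 * m - m ^ 2 := by nlinarith
  positivity

lemma csqrt_one_add_four_mul_lambda1 (h2 : 2 < m) (h8 : m ≤ 8) :
    csqrt (1 + 4 * lambda1 m) = sigma1 m := by
  rw [← sigma1_sq (by nlinarith)]
  exact csqrt_sq_of_re_pos (by simp [sigma1]; linarith)

end Sigma1

/-- `D_ε(λ; m)` with `ε⁻¹ (√(1 + 4εA) - 1)` rewritten as `4A / (√(1 + 4εA) + 1)`: unlike `D_ε`,
this is holomorphic in `(ε, λ)` across `ε = 0`. -/
noncomputable def regDispersion (m : ℝ) (p : ℂ × ℂ) : ℂ :=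
  -(1/4) * (csqrt (1 + 4 * p.1 * (m + p.1 * m ^ 2 + p.2)) + csqrt (1 + 4 * p.1 * p.2)) *
    (4 * (m + p.1 * m ^ 2 + p.2) / (csqrt (1 + 4 * p.1 * (m + p.1 * m ^ 2 + p.2)) + 1) + 1 +
      csqrt (1 + 4 * p.2)) *
    (1 - csqrt (1 + 4 * p.2) / (1 + m)) + m + p.1 * m ^ 2

lemma dispersion_eq_regDispersion {ε : ℝ} (hε : ε ≠ 0) (m : ℝ) (l : ℂ) :
    dispersion ε m l = regDispersion m (ε, l) := by
  have hεC : (ε : ℂ) ≠ 0 := ofReal_ne_zero.2 hε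
  unfold dispersion regDispersion
  set A : ℂ := m + ε * m ^ 2 + l
  set s := csqrt (1 + 4 * ε * A)
  have hs : s ^ 2 = 1 + 4 * ε * A := csqrt_sq _
  have hs1 : s + 1 ≠ 0 := csqrt_add_one_ne_zero _
  clear_value s
  have key : (ε : ℂ)⁻¹ * (s - 1) = 4 * A / (s + 1) := by
    rw [eq_div_iff hs1]
    field_simp
    linear_combination hs
  rw [key]

attribute [local fun_prop] analyticAt_fst analyticAt_snd in
lemma analyticAt_regDispersion_zero_left {m : ℝ} {w : ℂ}
    (hw : 1 + 4 * w ∈ slitPlane) : AnalyticAt ℂ (regDispersion m) (0, w) := by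
  have h1 : ∀ z : ℂ, 1 + 4 * 0 * z ∈ slitPlane := by simp
  unfold regDispersion csqrt
  fun_prop (disch := first | assumption | exact h1 _ | exact csqrt_add_one_ne_zero _)

section Zeros

variable {m : ℝ}

lemma regDispersion_zero_left (h0 : 0 ≤ m) (h8 : m ≤ 8) (w : ℂ) :
    regDispersion m (0, w) = (csqrt (1 + 4 * w) - 1) * (csqrt (1 + 4 * w) - sigma1 m) *
      (csqrt (1 + 4 * w) - conj (sigma1 m)) / (4 * (1 + m)) := by
  have hm : 1 + (m : ℂ) ≠ 0 := by exact_mod_cast (by linarith : 1 + m ≠ 0)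
  have hadd := sigma1_add_conj (m := m)
  have hmul := sigma1_mul_conj (by nlinarith : 0 ≤ 8 * m - m ^ 2)
  have hs := csqrt_sq (1 + 4 * w)
  simp only [regDispersion, zero_mul, mul_zero, add_zero, csqrt_one]
  set s := csqrt (1 + 4 * w)
  clear_value s
  obtain rfl : w = (s ^ 2 - 1) / 4 := by linear_combination (-1 / 4) * hs
  field_simp
  linear_combination (s - 1) * s * hadd - (s - 1) * hmul

lemma one_add_four_mul_lambda1_mem_slitPlane (h2 : 2 < m) (h8 : m < 8) :
    1 + 4 * lambda1 m ∈ slitPlane :=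
  one_add_four_mul_mem_slitPlane fun h => (lambda1_im_pos h2 h8).ne' h.1

lemma regDispersion_zero_lambda1 (h2 : 2 < m) (h8 : m ≤ 8) :
    regDispersion m (0, lambda1 m) = 0 := by
  rw [regDispersion_zero_left (by linarith) h8, csqrt_one_add_four_mul_lambda1 h2 h8]
  simp

lemma hasDerivAt_regDispersion_zero_left (h2 : 2 < m) (h8 : m < 8) :
    HasDerivAt (fun w => regDispersion m (0, w))
      ((sigma1 m - 1) * (sigma1 m - conj (sigma1 m)) * (2 / sigma1 m) / (4 * (1 + m)))
      (lambda1 m) := by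
  have hσ := csqrt_one_add_four_mul_lambda1 h2 h8.le
  have hlin : HasDerivAt (fun w : ℂ => 1 + 4 * w) 4 (lambda1 m) := by
    simpa using ((hasDerivAt_id (lambda1 m)).const_mul (4 : ℂ)).const_add 1
  have hs : HasDerivAt (fun w => csqrt (1 + 4 * w)) (2 / sigma1 m) (lambda1 m) := by
    have h := (hasDerivAt_csqrt (one_add_four_mul_lambda1_mem_slitPlane h2 h8)).comp
      (lambda1 m) hlin
    rw [hσ] at h
    exact h.congr_deriv (by ring)
  rw [funext (regDispersion_zero_left (by linarith) h8.le)]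
  refine ((((hs.sub_const 1).mul (hs.sub_const _)).mul (hs.sub_const _)).div_const _).congr_deriv ?_
  simp only [Pi.mul_apply, hσ]
  ring

lemma isInvertible_fderiv_regDispersion_comp_inr (h2 : 2 < m) (h8 : m < 8) :
    (fderiv ℂ (regDispersion m) (0, lambda1 m) ∘L .inr ℂ ℂ ℂ).IsInvertible := by
  have hσ := sigma1_im_pos (by linarith) h8
  have hσ0 : sigma1 m ≠ 0 := fun h => hσ.ne' (by simp [h])
  have hσ1 : sigma1 m - 1 ≠ 0 := fun h => hσ.ne' (by simpa using congrArg im h)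
  have hσσ : sigma1 m - conj (sigma1 m) ≠ 0 := fun h => hσ.ne' (by simpa using congrArg im h)
  have h4m : (4 * (1 + m) : ℂ) ≠ 0 := by exact_mod_cast (by linarith : 4 * (1 + m) ≠ 0)
  refine (analyticAt_regDispersion_zero_left (one_add_four_mul_lambda1_mem_slitPlane h2 h8)
    ).hasStrictFDerivAt.isInvertible_comp_inr (hasDerivAt_regDispersion_zero_left h2 h8) ?_
  exact div_ne_zero (mul_ne_zero (mul_ne_zero hσ1 hσσ) (div_ne_zero two_ne_zero hσ0)) h4m

lemma conj_lambda1_notMem_closedBall (h2 : 2 < m) (h6 : m < 6) {ρ : ℝ}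
    (hsub : closedBall (lambda1 m) ρ ⊆
      {z : ℂ | z.re < 0} \ {z : ℂ | z.im = 0 ∧ z.re ≤ -(1/4)}) :
    conj (lambda1 m) ∉ closedBall (lambda1 m) ρ := by
  -- Reaching `λ̄₁` forces the disk to contain the real point `Re λ₁`, hence `Re λ₁ > -1/4`, but not
  -- `i Im λ₁`, hence `2 Im λ₁ ≤ ρ < -Re λ₁ < 1/4`; for `m ∈ (2, 6)` these are incompatible.
  intro h
  have hb : 0 < (lambda1 m).im := lambda1_im_pos h2 (by linarith)
  have ha : (lambda1 m).re < 0 := by rw [lambda1_re]; nlinarith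
  have hρ : 2 * (lambda1 m).im ≤ ρ := by
    rwa [mem_closedBall, dist_conj_self, abs_of_pos hb] at h
  have hcut : -(1/4) < (lambda1 m).re := by
    have hmem : ((lambda1 m).re : ℂ) ∈ closedBall (lambda1 m) ρ := by
      rw [mem_closedBall, dist_of_re_eq (by simp)]
      simp [Real.dist_eq, abs_of_pos hb]
      linarith
    exact lt_of_not_ge fun h' => (hsub hmem).2 ⟨by simp, by simpa using h'⟩
  have hρa : ρ < -(lambda1 m).re := by
    by_contra! h'
    have hmem : ((lambda1 m).im * I : ℂ) ∈ closedBall (lambda1 m) ρ := by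
      rw [mem_closedBall, dist_of_im_eq (by simp)]
      simpa [Real.dist_eq, abs_of_neg ha] using h'
    simpa using (hsub hmem).1
  rw [lambda1_re] at hcut hρa
  rw [lambda1_im] at hρ
  have hq := Real.sq_sqrt (by nlinarith : 0 ≤ 8 * m - m ^ 2)
  have hm5 : 5 < m := by nlinarith
  have hq3 : 3 < √(8 * m - m ^ 2) := by nlinarith [Real.sqrt_nonneg (8 * m - m ^ 2)]
  nlinarith

lemma eq_lambda1_of_regDispersion_zero_left_eq_zero (h2 : 2 < m) (h6 : m < 6) {ρ : ℝ}
    (hsub : closedBall (lambda1 m) ρ ⊆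
      {z : ℂ | z.re < 0} \ {z : ℂ | z.im = 0 ∧ z.re ≤ -(1/4)})
    {w : ℂ} (hw : w ∈ closedBall (lambda1 m) ρ) (hzero : regDispersion m (0, w) = 0) :
    w = lambda1 m := by
  have h4m : (4 * (1 + m) : ℂ) ≠ 0 := by exact_mod_cast (by linarith : 4 * (1 + m) ≠ 0)
  have hσ := sigma1_sq (by nlinarith : 0 ≤ 8 * m - m ^ 2)
  have hs := csqrt_sq (1 + 4 * w)
  rw [regDispersion_zero_left (by linarith) (by linarith), div_eq_zero_iff, or_iff_left h4m]
    at hzero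
  rcases mul_eq_zero.1 hzero with h | h
  · rcases mul_eq_zero.1 h with h | h
    · rw [sub_eq_zero.1 h] at hs
      have hw0 : w = 0 := by linear_combination -hs / 4
      simpa [hw0] using (hsub hw).1
    · rw [sub_eq_zero.1 h, hσ] at hs
      linear_combination -hs / 4
  · rw [sub_eq_zero.1 h, ← map_pow, hσ] at hs
    have hwc : w = conj (lambda1 m) := by
      simp only [map_add, map_mul, map_one, map_ofNat] at hs
      linear_combination -hs / 4
    exact absurd (hwc ▸ hw) (conj_lambda1_notMem_closedBall h2 h6 hsub)

end Zeros

/-- for fixed m ∈ (2,6) and any ρ > 0 such that the closed disk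
centered at λ₁(m) of radius ρ is contained in the open left halfplane minus
the halfline (−∞,−1/4], there exists ε₀ > 0 such that for every ε ∈ (0,ε₀)
the function D_ε(·;m) has exactly one zero in the open disk of radius ρ around
λ₁(m); this zero has negative real part and converges to λ₁(m) as ε → 0⁺. -/
theorem hurwitz_root_near_lambda1 (m : ℝ) (hm2 : 2 < m) (hm6 : m < 6) :
    ∀ ρ > (0:ℝ),
      Metric.closedBall (lambda1 m) ρ ⊆
        {z : ℂ | z.re < 0} \ {z : ℂ | z.im = 0 ∧ z.re ≤ -(1/4)} →
      ∃ ε₀ > (0:ℝ), ∃ zr : ℝ → ℂ,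
        (∀ ε ∈ Set.Ioo (0:ℝ) ε₀,
          zr ε ∈ Metric.ball (lambda1 m) ρ ∧
          dispersion ε m (zr ε) = 0 ∧
          (∀ w ∈ Metric.ball (lambda1 m) ρ, dispersion ε m w = 0 → w = zr ε) ∧
          (zr ε).re < 0) ∧
        Tendsto zr (𝓝[>] (0:ℝ)) (𝓝 (lambda1 m)) := by
  intro ρ hρ hsub
  have hanalytic : ∀ w ∈ closedBall (lambda1 m) ρ, AnalyticAt ℂ (regDispersion m) (0, w) :=
    fun w hw => analyticAt_regDispersion_zero_left (one_add_four_mul_mem_slitPlane (hsub hw).2)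
  obtain ⟨ψ, hψ, hev⟩ := (hanalytic _ (mem_closedBall_self hρ.le)).hasStrictFDerivAt
    |>.exists_eventually_unique_zero_mem_ball
      (isInvertible_fderiv_regDispersion_comp_inr hm2 (by linarith))
      (regDispersion_zero_lambda1 hm2 (by linarith)) hρ
      (fun w hw => (hanalytic w hw).continuousAt)
      (fun w hw => eq_lambda1_of_regDispersion_zero_left_eq_zero hm2 hm6 hsub hw)
  obtain ⟨ε₀, hε₀, hψε⟩ := eventually_nhds_iff_ball.1 hev
  refine ⟨ε₀, hε₀, fun ε => ψ ε, fun ε hε => ?_,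
    hψ.comp ((continuous_ofReal.tendsto' 0 0 ofReal_zero).mono_left nhdsWithin_le_nhds)⟩
  obtain ⟨hmem, hzero, huniq⟩ := hψε ε (by simpa [abs_of_pos hε.1] using hε.2)
  simp only [dispersion_eq_regDispersion hε.1.ne']
  exact ⟨hmem, hzero, huniq, (hsub (ball_subset_closedBall hmem)).1⟩
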